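/- For every n ≥ 2, the rook monoid R_2 satisfies the semigroup identity v_{n,2}^{(2)} ≈ (v_{n,2}^{(2)})². -/

import Mathlib

universe u v

/-- Evaluation of a (nonempty) word, given as a list of variables, in a magma with an
explicit binary operation; the empty word evaluates to `none`. -/
def wEval {ι S : Type*} (mul : S → S → S) (ρ : ι → S) : List ι → Option S
  | [] => none
  | a :: l => some (l.foldl (fun s i => mul s (ρ i)) (ρ a))

/-- The word `u_{n,k,m} = x₁⋯x_{n+k}(xₙ⋯x₁·x_{n+1}⋯x_{n+k})^{2m-1}` (variables 0-indexed). -/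
def uWord (n k m : ℕ) : List ℕ :=
  List.range (n + k) ++
    (List.replicate (2 * m - 1) ((List.range n).reverse ++ List.range' n k)).flatten

/-- The words `v_{n,m}^{(h)}` (`h ≥ 1`), over variables indexed by `h`-tuples from `{0,…,2n-1}`:
`v_{n,m}^{(1)} = u_{n,n,m}`, and `v_{n,m}^{(h+1)}` is obtained by substituting, for the `j`-th
variable of `v_{n,m}^{(1)}`, the copy of `v_{n,m}^{(h)}` whose variables get `j` appended. -/
def vWord (n m : ℕ) : ℕ → List (List ℕ)
  | 0 => []
  | 1 => (uWord n n m).map (fun i => [i])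
  | h + 2 => (uWord n n m).flatMap (fun j => (vWord n m (h + 1)).map (fun xs => xs ++ [j]))

/-- The rook monoid `R_t`: zero-one `t × t` matrices with at most one entry equal to `1`
in each row and in each column. -/
def RookSet (t : ℕ) : Set (Matrix (Fin t) (Fin t) ℕ) :=
  {A | (∀ i j, A i j = 0 ∨ A i j = 1) ∧
    (∀ i j k, A i j = 1 → A i k = 1 → j = k) ∧
    (∀ i j k, A i k = 1 → A j k = 1 → i = j)}

/-!
Write `d` and `c` for the values of `x₁⋯x_{n+k}` and `xₙ⋯x₁·x_{n+1}⋯x_{n+k}` in `R₂`, so that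
`u_{n,k,m}` takes the value `d c^{2m-1}`. Since `c²` is idempotent, this is `d c` or `d c³`.
Now `d` and `c` are products of the same factors in two orders, and in `R₂` such products share
two invariants: a product is a permutation matrix iff all its factors are, and a nonzero product
is anti-diagonal iff an odd number of its factors are. A finite check shows that these two
coincidences force `d c` and `d c³` to be idempotent. The word `v^{(h)}_{n,m}` is a substitution
instance of `u_{n,n,m}`, so its value is idempotent as well.
-/

open List

abbrev Mat2 := Matrix (Fin 2) (Fin 2) ℕ

def rookTwoList : List Mat2 :=
  [!![0, 0; 0, 0], !![1, 0; 0, 1], !![0, 1; 1, 0], !![1, 0; 0, 0], !![0, 1; 0, 0],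
    !![0, 0; 1, 0], !![0, 0; 0, 1]]

def permTwoList : List Mat2 := [!![1, 0; 0, 1], !![0, 1; 1, 0]]

def antidiagParity (A : Mat2) : ZMod 2 := if A 0 1 = 1 ∨ A 1 0 = 1 then 1 else 0

theorem rookTwoList_mul_mem : ∀ a ∈ rookTwoList, ∀ b ∈ rookTwoList, a * b ∈ rookTwoList := by
  decide

theorem permTwoList_mul_mem : ∀ a ∈ permTwoList, ∀ b ∈ permTwoList, a * b ∈ permTwoList := by
  decide

theorem mem_permTwoList_of_mul_mem :
    ∀ a ∈ rookTwoList, ∀ b ∈ rookTwoList, a * b ∈ permTwoList →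
      a ∈ permTwoList ∧ b ∈ permTwoList := by
  decide

theorem antidiagParity_mul :
    ∀ a ∈ rookTwoList, ∀ b ∈ rookTwoList, a * b ≠ 0 →
      antidiagParity (a * b) = antidiagParity a + antidiagParity b := by
  decide

theorem isIdempotentElem_sq_of_mem_rookTwoList : ∀ c ∈ rookTwoList, IsIdempotentElem (c ^ 2) := by
  unfold IsIdempotentElem; decide

theorem isIdempotentElem_mul_of_antidiagParity_eq :
    ∀ d ∈ rookTwoList, ∀ c ∈ rookTwoList, (c ∈ permTwoList → d ∈ permTwoList) →
      (d ≠ 0 → c ≠ 0 → antidiagParity d = antidiagParity c) →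
        IsIdempotentElem (d * c) ∧ IsIdempotentElem (d * c ^ 3) := by
  unfold IsIdempotentElem; decide

def rookTwo : Submonoid Mat2 where
  carrier := {A | A ∈ rookTwoList}
  mul_mem' ha hb := rookTwoList_mul_mem _ ha _ hb
  one_mem' := by decide

def permTwo : Submonoid Mat2 where
  carrier := {A | A ∈ permTwoList}
  mul_mem' ha hb := permTwoList_mul_mem _ ha _ hb
  one_mem' := by decide

theorem mem_rookTwo {A : Mat2} : A ∈ rookTwo ↔ A ∈ rookTwoList := Iff.rfl

theorem mem_rookTwo_of_mem_rookSet {A : Mat2} (h : A ∈ RookSet 2) : A ∈ rookTwo := by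
  rw [mem_rookTwo]
  obtain ⟨hbin, hrow, hcol⟩ := h
  rcases hbin 0 0 with h00 | h00 <;> rcases hbin 0 1 with h01 | h01 <;>
    rcases hbin 1 0 with h10 | h10 <;> rcases hbin 1 1 with h11 | h11 <;>
    first
      | exact absurd (hrow 0 0 1 h00 h01) (by decide)
      | exact absurd (hrow 1 0 1 h10 h11) (by decide)
      | exact absurd (hcol 0 1 0 h00 h10) (by decide)
      | exact absurd (hcol 0 1 1 h01 h11) (by decide)
      | (rw [Matrix.eta_fin_two A, h00, h01, h10, h11]; decide)

theorem antidiagParity_list_prod {l : List Mat2} (hl : ∀ x ∈ l, x ∈ rookTwo) (h : l.prod ≠ 0) :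
    antidiagParity l.prod = (l.map antidiagParity).sum := by
  induction l with
  | nil => rfl
  | cons a l ih =>
    rw [forall_mem_cons] at hl
    rw [prod_cons] at h ⊢
    have hl0 : l.prod ≠ 0 := fun h0 => h (by rw [h0, mul_zero])
    rw [antidiagParity_mul a hl.1 _ (rookTwo.list_prod_mem hl.2) h, ih hl.2 hl0, map_cons,
      sum_cons]

theorem list_prod_mem_permTwo_iff {l : List Mat2} (hl : ∀ x ∈ l, x ∈ rookTwo) :
    l.prod ∈ permTwo ↔ ∀ x ∈ l, x ∈ permTwo := by
  refine ⟨fun h => ?_, permTwo.list_prod_mem⟩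
  induction l with
  | nil => simp
  | cons a l ih =>
    rw [forall_mem_cons] at hl ⊢
    rw [prod_cons] at h
    have hmem := mem_permTwoList_of_mul_mem a hl.1 _ (rookTwo.list_prod_mem hl.2) h
    exact ⟨hmem.1, ih hl.2 hmem.2⟩

theorem isIdempotentElem_prod_mul_prod_pow_of_perm {l l' : List Mat2}
    (hl : ∀ x ∈ l, x ∈ rookTwo) (hperm : l ~ l') {m : ℕ} (hm : m ≠ 0) :
    IsIdempotentElem (l.prod * l'.prod ^ (2 * m - 1)) := by
  have hl' : ∀ x ∈ l', x ∈ rookTwo := fun x hx => hl x (hperm.mem_iff.2 hx)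
  have hperms : l'.prod ∈ permTwo → l.prod ∈ permTwo := by
    rw [list_prod_mem_permTwo_iff hl, list_prod_mem_permTwo_iff hl']
    exact fun h x hx => h x (hperm.mem_iff.1 hx)
  have hparity : l.prod ≠ 0 → l'.prod ≠ 0 →
      antidiagParity l.prod = antidiagParity l'.prod := fun h h' => by
    rw [antidiagParity_list_prod hl h, antidiagParity_list_prod hl' h', (hperm.map _).sum_eq]
  have hc : l'.prod ∈ rookTwo := rookTwo.list_prod_mem hl'
  obtain ⟨hdc, hdc3⟩ := isIdempotentElem_mul_of_antidiagParity_eq _ (rookTwo.list_prod_mem hl)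
    _ hc hperms hparity
  obtain _ | _ | m := m
  · exact absurd rfl hm
  · simpa using hdc
  · have hsq := isIdempotentElem_sq_of_mem_rookTwoList _ hc
    rwa [show 2 * (m + 2) - 1 = 2 * (m + 1) + 1 by omega, pow_succ, pow_mul, hsq.pow_succ_eq,
      ← pow_succ]

section Words

variable {M : Type*} [Monoid M]

theorem uWord_map_prod (σ : ℕ → M) (n k m : ℕ) :
    ((uWord n k m).map σ).prod = ((range n ++ range' n k).map σ).prod *
      (((range n).reverse ++ range' n k).map σ).prod ^ (2 * m - 1) := by
  rw [uWord, range_add, ← range'_eq_map_range, map_append, prod_append, map_flatten,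
    prod_flatten, map_replicate, map_replicate, prod_replicate]

theorem vWord_add_two_map_prod (ρ : List ℕ → M) (n m h : ℕ) :
    ((vWord n m (h + 2)).map ρ).prod =
      ((uWord n n m).map fun j => ((vWord n m (h + 1)).map fun xs => ρ (xs ++ [j])).prod).prod := by
  simp only [vWord, flatMap_def, map_flatten, prod_flatten, map_map, Function.comp_def]

theorem wEval_eq_some_prod {ι : Type*} (ρ : ι → M) {w : List ι} (hw : w ≠ []) :
    wEval (· * ·) ρ w = some (w.map ρ).prod := by
  obtain _ | ⟨a, l⟩ := w
  · exact absurd rfl hw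
  · rw [wEval, map_cons, prod_cons, ← foldl_map, prod_eq_foldl,
      ← foldl_assoc (op := (· * · : M → M → M)), mul_one]

theorem wEval_append_self_of_isIdempotentElem {ι : Type*} (ρ : ι → M) {w : List ι}
    (hw : IsIdempotentElem (w.map ρ).prod) : wEval (· * ·) ρ (w ++ w) = wEval (· * ·) ρ w := by
  rcases eq_or_ne w [] with rfl | hne
  · rfl
  · rw [wEval_eq_some_prod ρ (append_ne_nil_of_left_ne_nil hne w), wEval_eq_some_prod ρ hne,
      map_append, prod_append, hw.eq]

end Words

theorem isIdempotentElem_uWord_map_prod {σ : ℕ → Mat2} (hσ : ∀ j, σ j ∈ rookTwo) (n k : ℕ)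
    {m : ℕ} (hm : m ≠ 0) : IsIdempotentElem ((uWord n k m).map σ).prod := by
  rw [uWord_map_prod]
  exact isIdempotentElem_prod_mul_prod_pow_of_perm (forall_mem_map.2 fun j _ => hσ j)
    (((reverse_perm _).symm.append_right _).map σ) hm

theorem isIdempotentElem_vWord_map_prod {ρ : List ℕ → Mat2} (hρ : ∀ v, ρ v ∈ rookTwo)
    (n h : ℕ) {m : ℕ} (hm : m ≠ 0) : IsIdempotentElem ((vWord n m h).map ρ).prod := by
  obtain _ | _ | h := h
  · exact IsIdempotentElem.one
  · rw [vWord, map_map]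
    exact isIdempotentElem_uWord_map_prod (fun j => hρ [j]) n n hm
  · rw [vWord_add_two_map_prod]
    exact isIdempotentElem_uWord_map_prod
      (fun j => rookTwo.list_prod_mem (forall_mem_map.2 fun xs _ => hρ (xs ++ [j]))) n n hm

theorem rook2_satisfies_v_identity :
    ∀ n, 2 ≤ n → ∀ ρ : List ℕ → Matrix (Fin 2) (Fin 2) ℕ, (∀ v, ρ v ∈ RookSet 2) →
      wEval (· * ·) ρ (vWord n 2 2) = wEval (· * ·) ρ (vWord n 2 2 ++ vWord n 2 2) := by
  intro n _ ρ hρ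
  have hρ₂ : ∀ v, ρ v ∈ rookTwo := fun v => mem_rookTwo_of_mem_rookSet (hρ v)
  exact (wEval_append_self_of_isIdempotentElem ρ
    (isIdempotentElem_vWord_map_prod hρ₂ n 2 two_ne_zero)).symm
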